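/- If M is a well-pointed topological monoid whose underlying space is a Dold space and π₀(M) is a group under the induced multiplication, then M is grouplike, i.e. M admits a continuous homotopy inversion ν : M → M with x·ν(x) and ν(x)·x both homotopic to the constant map at the unit. -/

import Mathlib

universe u

/-- The homotopy extension property for a map `i : A → X`. -/
def HasHEP {A : Type u} {X : Type u} [TopologicalSpace A] [TopologicalSpace X]
    (i : A → X) : Prop :=
  ∀ (Y : Type u) (_ : TopologicalSpace Y) (f : X → Y), Continuous f →
    ∀ H : unitInterval × A → Y, Continuous H → (∀ a, H (0, a) = f (i a)) →
      ∃ G : unitInterval × X → Y, Continuous G ∧ (∀ x, G (0, x) = f x) ∧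
        ∀ t a, G (t, i a) = H (t, a)

/-- A closed cofibration: a closed embedding with the homotopy extension property. -/
def IsClosedCofibration {A : Type u} {X : Type u} [TopologicalSpace A] [TopologicalSpace X]
    (i : A → X) : Prop :=
  Topology.IsClosedEmbedding i ∧ HasHEP i

/-- A topological monoid is well-pointed if the inclusion of its unit is a closed
cofibration. -/
def WellPointedMon (M : Type u) [Monoid M] [TopologicalSpace M] : Prop :=
  IsClosedCofibration (fun _ : PUnit.{u + 1} => (1 : M))

/-- Two maps of spaces are homotopic. -/
def MapsHomotopic {X Y : Type*} [TopologicalSpace X] [TopologicalSpace Y]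
    (f g : X → Y) : Prop :=
  ∃ H : C(unitInterval × X, Y), (∀ x, H (0, x) = f x) ∧ (∀ x, H (1, x) = g x)

/-- A Dold space: a space admitting a numerable cover (one carrying a subordinate
partition of unity) by subsets each of whose inclusions is nullhomotopic. -/
def DoldSpace (X : Type u) [TopologicalSpace X] : Prop :=
  ∃ (ι : Type u) (U : ι → Set X) (φ : PartitionOfUnity ι X Set.univ),
    φ.IsSubordinate U ∧
      ∀ i : ι, ∃ c : X, MapsHomotopic (fun u : U i => (u : X)) (fun _ => c)


/-!
For `x : M` let `E x` be the space of pairs `(y, γ)` with `γ` a path from `x * y` to `1`; a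
continuous section of `x ↦ E x` is exactly a continuous `ν` with `x * ν x` homotopic to `1`.
If the inclusion of `U` is homotopic to the constant map at `c` and `d` is an inverse of `c` in
`π₀(M)`, then left multiplication by any `x ∈ U` is a homotopy equivalence, and the fibres `E x`
contract onto an explicit point, continuously in `x ∈ U`. Given a partition of unity subordinate
to such sets, these local contractions, performed one after the other in the order of a
well-ordering of the index set with times governed by the partition, glue to a global section.

A right homotopy inverse `ν` is also a left one: `ν (ν x)` is a right homotopy inverse of `ν x`,
so `ν x * x ≃ ν x * x * (ν x * ν (ν x)) = ν x * (x * ν x) * ν (ν x) ≃ ν x * ν (ν x) ≃ 1`.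
-/

open Set Filter Topology unitInterval

noncomputable section

theorem mapsHomotopic_iff_homotopic {X Y : Type*} [TopologicalSpace X] [TopologicalSpace Y]
    {f g : X → Y} : MapsHomotopic f g ↔
      ∃ (hf : Continuous f) (hg : Continuous g), ContinuousMap.Homotopic ⟨f, hf⟩ ⟨g, hg⟩ := by
  constructor
  · rintro ⟨H, h0, h1⟩
    have hf : Continuous f := by
      rw [show f = fun x => H (0, x) from funext fun x => (h0 x).symm]; fun_prop
    have hg : Continuous g := by
      rw [show g = fun x => H (1, x) from funext fun x => (h1 x).symm]; fun_prop
    exact ⟨hf, hg, ⟨⟨H, h0, h1⟩⟩⟩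
  · rintro ⟨_, _, ⟨F⟩⟩
    exact ⟨F.toContinuousMap, F.apply_zero, F.apply_one⟩

namespace MapsHomotopic

variable {X Y Z : Type*} [TopologicalSpace X] [TopologicalSpace Y] [TopologicalSpace Z]
  {f g h : X → Y}

theorem refl (hf : Continuous f) : MapsHomotopic f f :=
  mapsHomotopic_iff_homotopic.2 ⟨hf, hf, .refl _⟩

theorem symm (hfg : MapsHomotopic f g) : MapsHomotopic g f := by
  obtain ⟨hf, hg, H⟩ := mapsHomotopic_iff_homotopic.1 hfg
  exact mapsHomotopic_iff_homotopic.2 ⟨hg, hf, H.symm⟩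

theorem trans (hfg : MapsHomotopic f g) (hgh : MapsHomotopic g h) : MapsHomotopic f h := by
  obtain ⟨hf, _, H⟩ := mapsHomotopic_iff_homotopic.1 hfg
  obtain ⟨_, hh, H'⟩ := mapsHomotopic_iff_homotopic.1 hgh
  exact mapsHomotopic_iff_homotopic.2 ⟨hf, hh, H.trans H'⟩

theorem comp (hfg : MapsHomotopic f g) {k : Z → X} (hk : Continuous k) :
    MapsHomotopic (f ∘ k) (g ∘ k) := by
  obtain ⟨H, h0, h1⟩ := hfg
  exact ⟨⟨fun p => H (p.1, k p.2), by fun_prop⟩, fun _ => h0 _, fun _ => h1 _⟩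

theorem mul [Mul Y] [ContinuousMul Y] {f' g' : X → Y} (hf : MapsHomotopic f f')
    (hg : MapsHomotopic g g') :
    MapsHomotopic (fun x => f x * g x) (fun x => f' x * g' x) := by
  obtain ⟨F, hF0, hF1⟩ := hf
  obtain ⟨G, hG0, hG1⟩ := hg
  exact ⟨⟨fun p => F p * G p, by fun_prop⟩, fun x => by simp [hF0, hG0],
    fun x => by simp [hF1, hG1]⟩

end MapsHomotopic

theorem Finset.foldl_sort_of_subset {α β : Type*} [LinearOrder α] {s t : Finset α} (hst : s ⊆ t)
    {f : β → α → β} (b : β) (hf : ∀ i ∈ t, i ∉ s → ∀ w, f w i = w) :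
    t.sort.foldl f b = s.sort.foldl f b := by
  have hfilter : t.sort.filter (· ∈ s) = s.sort :=
    (t.sortedLT_sort.pairwise.filter _).eq_of_mem_iff s.sortedLT_sort.pairwise fun a => by
      simpa using fun h => hst h
  rw [← hfilter, List.foldl_filter]
  exact List.foldl_ext _ _ _ fun w i hi => by
    split_ifs with h
    · rfl
    · exact hf i ((Finset.mem_sort _).1 hi) (by simpa using h) w

/-- A contraction, parametrized by `t : ℝ`, of the fibres `{w | G x w}` over `x ∈ V` onto a
section. `contr_of_one_le` holds for every `w`, so the gluing may start from an arbitrary point. -/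
structure FiberContraction {X F : Type*} [TopologicalSpace X] [TopologicalSpace F]
    (G : X → F → Prop) (V : Set X) where
  sec : X → F
  continuousOn_sec : ContinuousOn sec V
  sec_mem {x : X} : x ∈ V → G x (sec x)
  contr : ℝ → X → F → F
  continuousOn_contr :
    ContinuousOn (fun p : ℝ × X × F => contr p.1 p.2.1 p.2.2) {p | p.2.1 ∈ V ∧ G p.2.1 p.2.2}
  contr_mem {t : ℝ} {x : X} {w : F} : x ∈ V → G x w → G x (contr t x w)
  contr_of_nonpos {t : ℝ} {x : X} {w : F} : x ∈ V → t ≤ 0 → G x w → contr t x w = w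
  contr_of_one_le {t : ℝ} {x : X} (w : F) : x ∈ V → 1 ≤ t → contr t x w = sec x

namespace PartitionOfUnity

variable {ι X F : Type*} [TopologicalSpace X] [TopologicalSpace F] [LinearOrder ι]
  (φ : PartitionOfUnity ι X univ)

def weightLE (i : ι) (x : X) : ℝ := ∑ᶠ j, if j ≤ i then φ j x else 0

@[fun_prop]
theorem continuous_weightLE (i : ι) : Continuous (φ.weightLE i) := by
  refine continuous_finsum (fun j => continuous_if_const _ (fun _ => (φ j).continuous)
    fun _ => continuous_const) (φ.locallyFinite.subset fun j => ?_)
  exact Function.support_subset_iff'.2 fun x hx => by simp [Function.notMem_support.1 hx]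

theorem le_weightLE {i j : ι} (hji : j ≤ i) (x : X) : φ j x ≤ φ.weightLE i x := by
  have hfin : (Function.support fun j => if j ≤ i then φ j x else 0).Finite :=
    (φ.locallyFinite.point_finite x).subset
      (Function.support_subset_iff'.2 fun j hj => by simp [Function.notMem_support.1 hj])
  simpa [weightLE, hji] using single_le_finsum j hfin fun j => by split_ifs <;> simp [φ.nonneg]

theorem weightLE_eq_self {i : ι} {x : X} (h : ∀ j < i, φ j x = 0) :
    φ.weightLE i x = φ i x := by
  rw [weightLE, finsum_eq_single _ i fun j hj => ?_, if_pos le_rfl]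
  split_ifs with hji
  exacts [h j (lt_of_le_of_ne hji hj), rfl]

theorem exists_pos_forall_lt_eq_zero (x : X) : ∃ k, 0 < φ k x ∧ ∀ j < k, φ j x = 0 := by
  have hne : (φ.finsupport x).Nonempty := by
    obtain ⟨i, hi⟩ := φ.exists_pos (mem_univ x)
    exact ⟨i, by simpa using hi.ne'⟩
  refine ⟨_, (φ.nonneg _ x).lt_of_ne' (by simpa using (φ.finsupport x).min'_mem hne),
    fun j hj => ?_⟩
  by_contra h
  exact (Finset.min'_le _ j (by simpa using h)).not_gt hj

variable {G : X → F → Prop} (C : ∀ i, FiberContraction G {x | 0 < φ i x})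

/-- The time `3 φ i x / ∑_{j ≤ i} φ j x - 1` is `≥ 1` at the least index with `φ i x > 0`, and
is `< 0` near any point where `φ i` vanishes but some `φ j` with `j ≤ i` does not. -/
def glueStep (i : ι) (x : X) (w : F) : F :=
  if 0 < φ i x then (C i).contr (3 * φ i x / φ.weightLE i x - 1) x w else w

def glueSection (w₀ : F) (x : X) : F :=
  (φ.finsupport x).sort.foldl (fun w i => φ.glueStep C i x w) w₀

variable {φ C}

theorem glueStep_mem {i : ι} {x : X} {w : F} (hw : G x w) : G x (φ.glueStep C i x w) := by
  unfold glueStep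
  split_ifs with h
  exacts [(C i).contr_mem h hw, hw]

theorem glueStep_eq_sec {i : ι} {x : X} (hpos : 0 < φ i x)
    (hle : 2 * φ.weightLE i x ≤ 3 * φ i x) (w : F) : φ.glueStep C i x w = (C i).sec x := by
  have hW : 0 < φ.weightLE i x := hpos.trans_le (φ.le_weightLE le_rfl x)
  rw [glueStep, if_pos hpos]
  refine (C i).contr_of_one_le w hpos ?_
  rw [le_sub_iff_add_le, le_div_iff₀ hW]
  linarith

theorem glueStep_eq_self {i : ι} {x : X} {w : F} (hlt : 3 * φ i x < φ.weightLE i x)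
    (hw : G x w) : φ.glueStep C i x w = w := by
  unfold glueStep
  split_ifs with hpos
  · have hW : 0 < φ.weightLE i x := hpos.trans_le (φ.le_weightLE le_rfl x)
    refine (C i).contr_of_nonpos hpos ?_ hw
    rw [sub_nonpos, div_le_one hW]
    exact hlt.le
  · rfl

theorem continuousWithinAt_glueStep {i : ι} {x₀ : X} {w₀ : F} (hx₀ : 0 < φ.weightLE i x₀)
    (hw₀ : G x₀ w₀) :
    ContinuousWithinAt (fun p : X × F => φ.glueStep C i p.1 p.2) {p | G p.1 p.2} (x₀, w₀) := by
  rcases (φ.nonneg i x₀).eq_or_lt with h | h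
  · have hO : {x | 3 * φ i x < φ.weightLE i x} ∈ 𝓝 x₀ :=
      (isOpen_lt (by fun_prop) (φ.continuous_weightLE i)).mem_nhds (by simpa [← h] using hx₀)
    refine continuousWithinAt_snd.congr_of_eventuallyEq ?_ (by simp [glueStep, ← h])
    filter_upwards [inter_mem_nhdsWithin _ (continuous_fst.continuousAt.preimage_mem_nhds hO)]
      with p hp using glueStep_eq_self hp.2 hp.1
  · have hV : {x | 0 < φ i x} ∈ 𝓝 x₀ := (isOpen_lt continuous_const (φ i).continuous).mem_nhds h
    rw [← continuousWithinAt_inter (continuous_fst.continuousAt.preimage_mem_nhds hV)]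
    have hτ : ContinuousAt (fun x => 3 * φ i x / φ.weightLE i x - 1) x₀ :=
      (((φ i).continuous.continuousAt.const_mul 3).div
        (φ.continuous_weightLE i).continuousAt hx₀.ne').sub continuousAt_const
    refine ContinuousWithinAt.congr (f := fun p : X × F =>
        (C i).contr (3 * φ i p.1 / φ.weightLE i p.1 - 1) p.1 p.2) ?_
      (fun p hp => if_pos hp.2) (if_pos h)
    have hτ' : ContinuousAt (fun p : X × F => (3 * φ i p.1 / φ.weightLE i p.1 - 1, p))
        (x₀, w₀) :=
      (ContinuousAt.comp (g := fun x => 3 * φ i x / φ.weightLE i x - 1) hτ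
        continuousAt_fst).prodMk continuousAt_id
    have hc := (C i).continuousOn_contr (3 * φ i x₀ / φ.weightLE i x₀ - 1, x₀, w₀) ⟨h, hw₀⟩
    exact hc.comp_of_eq hτ'.continuousWithinAt (fun p hp => ⟨hp.2, hp.1⟩) rfl

theorem foldl_glueStep_mem {x : X} {w : F} (hw : G x w) (l : List ι) :
    G x (l.foldl (fun w i => φ.glueStep C i x w) w) := by
  induction l generalizing w with
  | nil => exact hw
  | cons i l ih => exact ih (glueStep_mem hw)

theorem glueSection_mem (w₀ : F) (x : X) : G x (φ.glueSection C w₀ x) := by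
  obtain ⟨k, hk, hmin⟩ := φ.exists_pos_forall_lt_eq_zero x
  have hks : k ∈ φ.finsupport x := by simpa using hk.ne'
  have hlt : ∀ j ∈ (φ.finsupport x).erase k, k ≤ j := fun j hj =>
    not_lt.1 fun hjk => by simpa [hmin j hjk] using (Finset.mem_erase.1 hj).2
  rw [glueSection, ← Finset.insert_erase hks, Finset.sort_insert _ hlt (Finset.notMem_erase k _),
    List.foldl_cons, glueStep_eq_sec hk (by rw [φ.weightLE_eq_self hmin]; linarith)]
  exact foldl_glueStep_mem ((C k).sec_mem hk) _

theorem continuousAt_foldl_glueStep {x₀ : X} {f : X → F} (hf : ContinuousAt f x₀)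
    (hfG : ∀ᶠ x in 𝓝 x₀, G x (f x)) (l : List ι) (hl : ∀ i ∈ l, 0 < φ.weightLE i x₀) :
    ContinuousAt (fun x => l.foldl (fun w i => φ.glueStep C i x w) (f x)) x₀ := by
  induction l generalizing f with
  | nil => exact hf
  | cons i l ih =>
    refine ih ?_ (hfG.mono fun x hx => glueStep_mem hx) fun j hj => hl j (.tail _ hj)
    have hstep := continuousWithinAt_glueStep (C := C) (hl i (.head _)) hfG.self_of_nhds
    have hpair : ContinuousAt (fun x => (x, f x)) x₀ := continuousAt_id.prodMk hf
    exact (continuousWithinAt_univ _ _).1 (hstep.comp_of_preimage_mem_nhdsWithin_of_eq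
      hpair.continuousWithinAt (by rwa [nhdsWithin_univ]) rfl)

theorem continuous_glueSection (w₀ : F) : Continuous (φ.glueSection C w₀) := by
  refine continuous_iff_continuousAt.2 fun x₀ => ?_
  obtain ⟨k, hk, hmin⟩ := φ.exists_pos_forall_lt_eq_zero x₀
  have hkT : k ∈ φ.fintsupport x₀ := φ.finsupport_subset_fintsupport x₀ (by simpa using hk.ne')
  obtain ⟨l₁, l₂, hT⟩ := List.append_of_mem ((Finset.mem_sort (α := ι) (· ≤ ·)).2 hkT)
  have hl₂ : ∀ i ∈ l₂, k < i := by
    have := (Finset.sortedLT_sort (φ.fintsupport x₀)).pairwise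
    rw [hT, List.pairwise_append, List.pairwise_cons] at this
    exact this.2.1.1
  have hV : {x | 0 < φ k x} ∈ 𝓝 x₀ := (isOpen_lt continuous_const (φ k).continuous).mem_nhds hk
  have hdom : {x | 2 * φ.weightLE k x < 3 * φ k x} ∈ 𝓝 x₀ :=
    (isOpen_lt (by fun_prop) (by fun_prop)).mem_nhds
      (by rw [mem_ofPred_eq, φ.weightLE_eq_self hmin]; linarith)
  have heq : (fun x => l₂.foldl (fun w i => φ.glueStep C i x w) ((C k).sec x))
      =ᶠ[𝓝 x₀] φ.glueSection C w₀ := by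
    filter_upwards [φ.eventually_finsupport_subset x₀, hV, hdom] with x hsub hpos hlt
    rw [glueSection, ← Finset.foldl_sort_of_subset hsub _ fun i _ hi w => by
      simp [glueStep, show φ i x = 0 by simpa using hi], hT, List.foldl_append,
      List.foldl_cons, glueStep_eq_sec hpos hlt.le]
  refine (continuousAt_foldl_glueStep ((C k).continuousOn_sec.continuousAt hV)
    (eventually_of_mem hV fun x hx => (C k).sec_mem hx) l₂
    fun i hi => hk.trans_le (φ.le_weightLE (hl₂ i hi).le x₀)).congr heq

end PartitionOfUnity

theorem PartitionOfUnity.exists_continuous_section {ι X F : Type*} [TopologicalSpace X]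
    [TopologicalSpace F] (φ : PartitionOfUnity ι X univ) {G : X → F → Prop}
    (C : ∀ i, FiberContraction G {x | 0 < φ i x}) :
    ∃ s : X → F, Continuous s ∧ ∀ x, G x (s x) := by
  let : LinearOrder ι := IsWellOrder.linearOrder WellOrderingRel
  rcases isEmpty_or_nonempty X with hX | ⟨⟨x⟩⟩
  · exact ⟨isEmptyElim, continuous_of_discreteTopology, isEmptyElim⟩
  · obtain ⟨i, hi⟩ := φ.exists_pos (mem_univ x)
    exact ⟨φ.glueSection C ((C i).sec x), φ.continuous_glueSection _, φ.glueSection_mem _⟩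

namespace ContinuousMap

variable {X : Type*} [TopologicalSpace X]

def extendI (γ : C(I, X)) : ℝ → X := Set.IccExtend zero_le_one γ

theorem extendI_of_nonpos (γ : C(I, X)) {r : ℝ} (h : r ≤ 0) : γ.extendI r = γ 0 :=
  IccExtend_of_le_left _ _ h

theorem extendI_of_one_le (γ : C(I, X)) {r : ℝ} (h : 1 ≤ r) : γ.extendI r = γ 1 :=
  IccExtend_of_right_le _ _ h

@[simp]
theorem extendI_zero (γ : C(I, X)) : γ.extendI 0 = γ 0 := γ.extendI_of_nonpos le_rfl

@[simp]
theorem extendI_one (γ : C(I, X)) : γ.extendI 1 = γ 1 := γ.extendI_of_one_le le_rfl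

@[simp]
theorem extendI_coe (γ : C(I, X)) (u : I) : γ.extendI u = γ u :=
  IccExtend_val _ _ u

@[fun_prop]
theorem _root_.Continuous.extendI {α : Type*} [TopologicalSpace α] {γ : α → C(I, X)}
    {r : α → ℝ} (hγ : Continuous γ) (hr : Continuous r) :
    Continuous fun a => (γ a).extendI (r a) := by
  unfold ContinuousMap.extendI; fun_prop

end ContinuousMap

/-- Parameters of the pieces below are clamped to `[0, 1]` so that each piece is continuous on
all of `ℝ`, as `Continuous.if_le` requires. -/
def clamp01 (r : ℝ) : ℝ := max 0 (min 1 r)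

@[fun_prop]
theorem continuous_clamp01 : Continuous clamp01 := by unfold clamp01; fun_prop

theorem clamp01_nonneg (r : ℝ) : 0 ≤ clamp01 r := le_max_left _ _

theorem clamp01_le_one (r : ℝ) : clamp01 r ≤ 1 := max_le zero_le_one (min_le_left _ _)

theorem clamp01_of_nonpos {r : ℝ} (h : r ≤ 0) : clamp01 r = 0 :=
  max_eq_left ((min_le_right _ _).trans h)

theorem clamp01_of_one_le {r : ℝ} (h : 1 ≤ r) : clamp01 r = 1 := by
  simp [clamp01, min_eq_left h]

variable {M : Type*} [Monoid M] [TopologicalSpace M]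

def IsRightInverseWitness (x : M) (w : M × C(I, M)) : Prop := w.2 0 = x * w.1 ∧ w.2 1 = 1

/-- A nullhomotopy of the inclusion of `U`, with time extended to `ℝ`, ending at `c`, together
with an inverse `d` of `c` in `π₀(M)`. -/
structure Patch (U : Set M) where
  c : M
  d : M
  htpy : C(ℝ × U, M)
  htpy_of_nonpos {r : ℝ} (x : U) : r ≤ 0 → htpy (r, x) = x
  htpy_of_one_le {r : ℝ} (x : U) : 1 ≤ r → htpy (r, x) = c
  p : Path (c * d) 1
  q : Path (d * c) 1

theorem Patch.nonempty_of_mapsHomotopic {U V : Set M} (hVU : V ⊆ U) {c : M}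
    (hc : MapsHomotopic (fun u : U => (u : M)) fun _ => c)
    (hπ : ∀ x : M, ∃ y : M, Joined (x * y) 1 ∧ Joined (y * x) 1) : Nonempty (Patch V) := by
  obtain ⟨H, h0, h1⟩ := hc
  obtain ⟨d, hp, hq⟩ := hπ c
  refine ⟨⟨c, d, ⟨fun p => H (projIcc 0 1 zero_le_one p.1, ⟨p.2, hVU p.2.2⟩), by fun_prop⟩,
    fun x hr => ?_, fun x hr => ?_, hp.somePath, hq.somePath⟩⟩
  · simpa [projIcc_of_le_left _ hr] using h0 ⟨x, hVU x.2⟩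
  · simpa [projIcc_of_right_le _ hr] using h1 ⟨x, hVU x.2⟩

namespace Patch

variable {U : Set M} (P : Patch U)

def leftInvPath (x : U) (r : ℝ) : M :=
  if r ≤ 2⁻¹ then P.d * P.htpy (2 * r, x) else P.q.extend (2 * r - 1)

def rightInvPath (x : U) (r : ℝ) : M :=
  if r ≤ 2⁻¹ then P.htpy (2 * r, x) * P.d else P.p.extend (2 * r - 1)

theorem leftInvPath_of_nonpos (x : U) {r : ℝ} (h : r ≤ 0) : P.leftInvPath x r = P.d * x := by
  rw [leftInvPath, if_pos (by linarith), P.htpy_of_nonpos x (by linarith)]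

theorem leftInvPath_of_one_le (x : U) {r : ℝ} (h : 1 ≤ r) : P.leftInvPath x r = 1 := by
  rw [leftInvPath, if_neg (by linarith), P.q.extend_of_one_le (by linarith)]

theorem rightInvPath_of_nonpos (x : U) {r : ℝ} (h : r ≤ 0) : P.rightInvPath x r = x * P.d := by
  rw [rightInvPath, if_pos (by linarith), P.htpy_of_nonpos x (by linarith)]

theorem rightInvPath_of_one_le (x : U) {r : ℝ} (h : 1 ≤ r) : P.rightInvPath x r = 1 := by
  rw [rightInvPath, if_neg (by linarith), P.p.extend_of_one_le (by linarith)]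

def slide (x : U) (w : M × C(I, M)) (s : ℝ) : M :=
  if s ≤ 2⁻¹ then P.leftInvPath x (1 - 2 * s) * w.1 else P.d * w.2.extendI (2 * s - 1)

theorem slide_of_nonpos (x : U) (w : M × C(I, M)) {s : ℝ} (h : s ≤ 0) :
    P.slide x w s = w.1 := by
  rw [slide, if_pos (by linarith), P.leftInvPath_of_one_le x (by linarith), one_mul]

theorem slide_of_one_le (x : U) (w : M × C(I, M)) {s : ℝ} (h : 1 ≤ s) :
    P.slide x w s = P.d * w.2 1 := by
  rw [slide, if_neg (by linarith), w.2.extendI_of_one_le (by linarith)]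

def excursion (x : U) (w : M × C(I, M)) (s v : ℝ) : M :=
  if v ≤ clamp01 s / 2 then P.leftInvPath x (2 * v) * w.1
  else if v ≤ 3 * clamp01 s / 4 then P.leftInvPath x (3 * clamp01 s - 4 * v) * w.1
  else P.d * w.2.extendI ((v - 3 * clamp01 s / 4) / (1 - 3 * clamp01 s / 4))

theorem excursion_denom_pos (s : ℝ) : 0 < 1 - 3 * clamp01 s / 4 := by
  linarith [clamp01_le_one s]

theorem excursion_zero (x : U) (w : M × C(I, M)) (s : ℝ) :
    P.excursion x w s 0 = P.d * x * w.1 := by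
  rw [excursion, if_pos (by linarith [clamp01_nonneg s]), mul_zero,
    P.leftInvPath_of_nonpos x le_rfl]

theorem excursion_one (x : U) (w : M × C(I, M)) (s : ℝ) :
    P.excursion x w s 1 = P.d * w.2 1 := by
  have h := clamp01_le_one s
  rw [excursion, if_neg (by linarith), if_neg (by linarith),
    div_self (excursion_denom_pos s).ne', w.2.extendI_one]

def slideWitness (x : U) (w : M × C(I, M)) (s v : ℝ) : M :=
  if v ≤ 2⁻¹ then P.leftInvPath x (2 * v) * P.slide x w (clamp01 s)
  else P.slide x w (clamp01 s + (2 * v - 1) * (1 - clamp01 s))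

def stage1 (x : U) (w : M × C(I, M)) (s u : ℝ) : M :=
  if u ≤ clamp01 s / 3 then P.rightInvPath x (1 - 3 * u) * (x * w.1)
  else if u ≤ 1 - clamp01 s / 3 then
    P.rightInvPath x (1 - clamp01 s) *
      w.2.extendI ((u - clamp01 s / 3) / (1 - 2 * (clamp01 s / 3)))
  else P.rightInvPath x (3 * u - 2)

theorem stage1_denom_pos (s : ℝ) : 0 < 1 - 2 * (clamp01 s / 3) := by
  linarith [clamp01_le_one s]

def stage2 (x : U) (w : M × C(I, M)) (s u : ℝ) : M :=
  if u ≤ 3⁻¹ then P.rightInvPath x (1 - 3 * u) * (x * w.1)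
  else if u ≤ 2 / 3 then x * P.excursion x w s (3 * u - 1)
  else P.rightInvPath x (3 * u - 2)

def stage3 (x : U) (w : M × C(I, M)) (s u : ℝ) : M :=
  if u ≤ 3⁻¹ then P.rightInvPath x (1 - 3 * u) * (x * P.slide x w (clamp01 s))
  else if u ≤ 2 / 3 then x * P.slideWitness x w s (3 * u - 1)
  else P.rightInvPath x (3 * u - 2)

theorem stage1_one_eq_stage2_zero (x : U) (w : M × C(I, M)) (u : ℝ) :
    P.stage1 x w 1 u = P.stage2 x w 0 u := by
  simp only [stage1, stage2, excursion, clamp01_of_one_le le_rfl, clamp01_of_nonpos le_rfl]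
  split_ifs <;> first | rfl | linarith | skip
  rw [sub_self, P.rightInvPath_of_nonpos x le_rfl, mul_assoc]
  congr 3
  norm_num
  ring

theorem stage2_one_eq_stage3_zero (x : U) (w : M × C(I, M)) (u : ℝ) :
    P.stage2 x w 1 u = P.stage3 x w 0 u := by
  simp only [stage2, stage3, excursion, slideWitness, clamp01_of_one_le le_rfl,
    clamp01_of_nonpos le_rfl, P.slide_of_nonpos x w le_rfl, zero_add, sub_zero, mul_one]
  rw [slide]
  split_ifs <;> first | rfl | linarith | skip
  · congr 3; ring
  · congr 4; norm_num; ring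

/-- The contraction of the fibre over `x`. In `stage1` the path `γ : x * y ⇝ 1` is conjugated by
`rightInvPath x : x * d ⇝ 1`; in `stage2` the excursion `leftInvPath x * y` followed by its
reverse is inserted after `x * d * x * y`; in `stage3` the point `y` slides to `d` along
`slide x w : y ⇝ d * x * y ⇝ d`, which absorbs the reversed excursion and `γ`. The result
`secPath x` no longer depends on `w`. -/
def contrPath (x : U) (w : M × C(I, M)) (t u : ℝ) : M :=
  if t ≤ 3⁻¹ then P.stage1 x w (3 * t) u
  else if t ≤ 2 / 3 then P.stage2 x w (3 * t - 1) u
  else P.stage3 x w (3 * t - 2) u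

def contrPoint (x : U) (w : M × C(I, M)) (t : ℝ) : M :=
  if t ≤ 2 / 3 then w.1 else P.slide x w (clamp01 (3 * t - 2))

def secPath (x : U) (u : ℝ) : M :=
  if u ≤ 3⁻¹ then P.rightInvPath x (1 - 3 * u) * (x * P.d)
  else if u ≤ 2⁻¹ then x * (P.leftInvPath x (6 * u - 2) * P.d)
  else if u ≤ 2 / 3 then x * P.d
  else P.rightInvPath x (3 * u - 2)

theorem contrPath_zero (x : U) (w : M × C(I, M)) (t : ℝ) :
    P.contrPath x w t 0 = x * P.contrPoint x w t := by
  have := clamp01_nonneg (3 * t)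
  simp only [contrPath, contrPoint, stage1, stage2, stage3]
  split_ifs <;> first | linarith | norm_num [P.rightInvPath_of_one_le]

theorem contrPath_one (x : U) {w : M × C(I, M)} (hw : w.2 1 = 1) (t : ℝ) :
    P.contrPath x w t 1 = 1 := by
  have := clamp01_nonneg (3 * t)
  have := clamp01_le_one (3 * t)
  simp only [contrPath, stage1, stage2, stage3]
  split_ifs <;> first | linarith | norm_num [P.rightInvPath_of_one_le, hw]
  simp [show clamp01 (3 * t) = 0 by linarith, P.rightInvPath_of_one_le, hw]

theorem contrPath_of_nonpos (x : U) {w : M × C(I, M)} (hw : IsRightInverseWitness (x : M) w)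
    {t : ℝ} (ht : t ≤ 0) (u : I) : P.contrPath x w t u = w.2 u := by
  rw [contrPath, if_pos (by linarith), stage1, clamp01_of_nonpos (by linarith)]
  simp only [zero_div, sub_zero, mul_zero, div_one]
  split_ifs with h0 h1
  · obtain rfl : u = 0 := le_antisymm h0 u.2.1
    simp [P.rightInvPath_of_one_le, hw.1]
  · simp [P.rightInvPath_of_one_le]
  · exact absurd u.2.2 h1

theorem contrPath_of_one_le (x : U) {w : M × C(I, M)} (hw : w.2 1 = 1) {t : ℝ} (ht : 1 ≤ t)
    (u : ℝ) : P.contrPath x w t u = P.secPath x u := by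
  have hd : P.slide x w 1 = P.d := by rw [P.slide_of_one_le x w le_rfl, hw, mul_one]
  rw [contrPath, if_neg (by linarith), if_neg (by linarith), stage3, secPath, slideWitness,
    clamp01_of_one_le (by linarith), hd]
  simp only [sub_self, mul_zero, add_zero, hd]
  split_ifs <;> first | rfl | linarith | skip
  congr 3
  ring

theorem contrPoint_of_nonpos (x : U) (w : M × C(I, M)) {t : ℝ} (ht : t ≤ 0) :
    P.contrPoint x w t = w.1 :=
  if_pos (by linarith)

theorem contrPoint_of_one_le (x : U) {w : M × C(I, M)} (hw : w.2 1 = 1) {t : ℝ} (ht : 1 ≤ t) :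
    P.contrPoint x w t = P.d := by
  rw [contrPoint, if_neg (by linarith), clamp01_of_one_le (by linarith),
    P.slide_of_one_le x w le_rfl, hw, mul_one]

theorem secPath_zero (x : U) : P.secPath x 0 = x * P.d := by
  norm_num [secPath, P.rightInvPath_of_one_le]

theorem secPath_one (x : U) : P.secPath x 1 = 1 := by
  norm_num [secPath, P.rightInvPath_of_one_le]

section Continuity

variable [ContinuousMul M] {α : Type*} [TopologicalSpace α] {x : α → U} {w : α → M × C(I, M)}
  {r s t u : α → ℝ}

@[fun_prop]
theorem continuous_leftInvPath (hx : Continuous x) (hr : Continuous r) :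
    Continuous fun a => P.leftInvPath (x a) (r a) :=
  Continuous.if_le (by fun_prop) (by fun_prop) hr continuous_const fun a ha => by
    simp [ha, P.htpy_of_one_le]

@[fun_prop]
theorem continuous_rightInvPath (hx : Continuous x) (hr : Continuous r) :
    Continuous fun a => P.rightInvPath (x a) (r a) :=
  Continuous.if_le (by fun_prop) (by fun_prop) hr continuous_const fun a ha => by
    simp [ha, P.htpy_of_one_le]

@[fun_prop]
theorem continuous_slide (hx : Continuous x) (hw : Continuous w)
    (hxw : ∀ a, IsRightInverseWitness (x a : M) (w a)) (hs : Continuous s) :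
    Continuous fun a => P.slide (x a) (w a) (s a) :=
  Continuous.if_le (by fun_prop) (by fun_prop) hs continuous_const fun a ha => by
    simp [ha, P.leftInvPath_of_nonpos, (hxw a).1, mul_assoc]

@[fun_prop]
theorem continuous_excursion (hx : Continuous x) (hw : Continuous w)
    (hxw : ∀ a, IsRightInverseWitness (x a : M) (w a)) (hs : Continuous s) (hu : Continuous u) :
    Continuous fun a => P.excursion (x a) (w a) (s a) (u a) := by
  refine Continuous.if_le (by fun_prop) (Continuous.if_le (by fun_prop) ?_ hu (by fun_prop) ?_)
    hu (by fun_prop) fun a ha => ?_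
  · fun_prop (disch := exact fun a => (excursion_denom_pos (s a)).ne')
  · intro a ha
    rw [ha, show 3 * clamp01 (s a) - 4 * (3 * clamp01 (s a) / 4) = 0 by ring]
    simp [P.leftInvPath_of_nonpos, (hxw a).1, mul_assoc]
  · have h := clamp01_nonneg (s a)
    rw [if_pos (by linarith), ha]
    ring_nf

@[fun_prop]
theorem continuous_slideWitness (hx : Continuous x) (hw : Continuous w)
    (hxw : ∀ a, IsRightInverseWitness (x a : M) (w a)) (hs : Continuous s) (hu : Continuous u) :
    Continuous fun a => P.slideWitness (x a) (w a) (s a) (u a) :=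
  Continuous.if_le (by fun_prop) (by fun_prop) hu continuous_const fun a ha => by
    norm_num [ha, P.leftInvPath_of_one_le]

@[fun_prop]
theorem continuous_stage1 (hx : Continuous x) (hw : Continuous w)
    (hxw : ∀ a, IsRightInverseWitness (x a : M) (w a)) (hs : Continuous s) (hu : Continuous u) :
    Continuous fun a => P.stage1 (x a) (w a) (s a) (u a) := by
  refine Continuous.if_le (by fun_prop) (Continuous.if_le ?_ (by fun_prop) hu (by fun_prop) ?_)
    hu (by fun_prop) fun a ha => ?_
  · fun_prop (disch := exact fun a => (stage1_denom_pos (s a)).ne')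
  · intro a ha
    have h := stage1_denom_pos (s a)
    rw [ha, show 1 - clamp01 (s a) / 3 - clamp01 (s a) / 3 = 1 - 2 * (clamp01 (s a) / 3) by ring,
      div_self h.ne', show 3 * (1 - clamp01 (s a) / 3) - 2 = 1 - clamp01 (s a) by ring]
    simp [(hxw a).2]
  · have h := stage1_denom_pos (s a)
    rw [if_pos (by linarith), ha, sub_self, zero_div]
    simp [(hxw a).1, show 1 - 3 * (clamp01 (s a) / 3) = 1 - clamp01 (s a) by ring]

@[fun_prop]
theorem continuous_stage2 (hx : Continuous x) (hw : Continuous w)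
    (hxw : ∀ a, IsRightInverseWitness (x a : M) (w a)) (hs : Continuous s) (hu : Continuous u) :
    Continuous fun a => P.stage2 (x a) (w a) (s a) (u a) := by
  refine Continuous.if_le (by fun_prop) (Continuous.if_le (by fun_prop) (by fun_prop) hu
    continuous_const fun a ha => ?_) hu continuous_const fun a ha => ?_
  · norm_num [ha, P.excursion_one, (hxw a).2, P.rightInvPath_of_nonpos]
  · norm_num [ha, P.excursion_zero, P.rightInvPath_of_nonpos, mul_assoc]

@[fun_prop]
theorem continuous_stage3 (hx : Continuous x) (hw : Continuous w)
    (hxw : ∀ a, IsRightInverseWitness (x a : M) (w a)) (hs : Continuous s) (hu : Continuous u) :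
    Continuous fun a => P.stage3 (x a) (w a) (s a) (u a) := by
  refine Continuous.if_le (by fun_prop) (Continuous.if_le (by fun_prop) (by fun_prop) hu
    continuous_const fun a ha => ?_) hu continuous_const fun a ha => ?_
  · norm_num [ha, slideWitness, P.slide_of_one_le, (hxw a).2, P.rightInvPath_of_nonpos]
  · norm_num [ha, slideWitness, P.leftInvPath_of_nonpos, P.rightInvPath_of_nonpos, mul_assoc]

@[fun_prop]
theorem continuous_contrPath (hx : Continuous x) (hw : Continuous w)
    (hxw : ∀ a, IsRightInverseWitness (x a : M) (w a)) (ht : Continuous t) (hu : Continuous u) :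
    Continuous fun a => P.contrPath (x a) (w a) (t a) (u a) := by
  refine Continuous.if_le (by fun_prop) (Continuous.if_le (by fun_prop) (by fun_prop) ht
    continuous_const fun a ha => ?_) ht continuous_const fun a ha => ?_
  · norm_num [ha, stage2_one_eq_stage3_zero]
  · norm_num [ha, stage1_one_eq_stage2_zero]

@[fun_prop]
theorem continuous_contrPoint (hx : Continuous x) (hw : Continuous w)
    (hxw : ∀ a, IsRightInverseWitness (x a : M) (w a)) (ht : Continuous t) :
    Continuous fun a => P.contrPoint (x a) (w a) (t a) :=
  Continuous.if_le (by fun_prop) (by fun_prop) ht continuous_const fun a ha => by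
    norm_num [ha, clamp01_of_nonpos, P.slide_of_nonpos]

@[fun_prop]
theorem continuous_secPath (hx : Continuous x) (hu : Continuous u) :
    Continuous fun a => P.secPath (x a) (u a) := by
  refine Continuous.if_le (by fun_prop) (Continuous.if_le (by fun_prop)
    (Continuous.if_le (by fun_prop) (by fun_prop) hu continuous_const fun a ha => ?_) hu
    continuous_const fun a ha => ?_) hu continuous_const fun a ha => ?_
  · norm_num [ha, P.rightInvPath_of_nonpos]
  · norm_num [ha, P.leftInvPath_of_one_le]
  · norm_num [ha, P.leftInvPath_of_nonpos, P.rightInvPath_of_nonpos, mul_assoc]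

end Continuity

variable [ContinuousMul M]

def secMap (x : U) : C(I, M) := ⟨fun u => P.secPath x u, by fun_prop⟩

def contrMap (x : U) {w : M × C(I, M)} (hw : IsRightInverseWitness (x : M) w) (t : ℝ) :
    C(I, M) :=
  ⟨fun u => P.contrPath x w t u, by fun_prop (disch := exact fun _ => hw)⟩

open scoped Classical in
def sec (x : M) : M × C(I, M) :=
  (P.d, if hx : x ∈ U then P.secMap ⟨x, hx⟩ else .const _ 1)

open scoped Classical in
def fiberContraction : FiberContraction (IsRightInverseWitness (M := M)) U where
  sec := P.sec
  continuousOn_sec := by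
    rw [continuousOn_iff_continuous_domRestrict]
    refine continuous_const.prodMk ((ContinuousMap.continuous_of_continuous_uncurry
      (fun x : U => P.secMap x)
      (show Continuous fun p : U × I => P.secPath p.1 p.2 by fun_prop)).congr fun x => ?_)
    simp
  sec_mem {x} hx := by
    simp only [sec, dif_pos hx]
    exact ⟨by simpa [secMap] using P.secPath_zero ⟨x, hx⟩, by simpa [secMap] using P.secPath_one _⟩
  contr t x w := if h : x ∈ U ∧ IsRightInverseWitness x w then
      (P.contrPoint ⟨x, h.1⟩ w t, P.contrMap ⟨x, h.1⟩ h.2 t)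
    else P.sec x
  continuousOn_contr := by
    rw [continuousOn_iff_continuous_domRestrict]
    set T := {p : ℝ × M × (M × C(I, M)) | p.2.1 ∈ U ∧ IsRightInverseWitness p.2.1 p.2.2}
    have hx : Continuous fun q : T => (⟨q.1.2.1, q.2.1⟩ : U) := by fun_prop
    have hxw : ∀ q : T, IsRightInverseWitness (q.1.2.1 : M) q.1.2.2 := fun q => q.2.2
    refine ((P.continuous_contrPoint (w := fun q : T => q.1.2.2) (t := fun q => q.1.1) hx
      (by fun_prop) hxw (by fun_prop)).prodMk
      (ContinuousMap.continuous_of_continuous_uncurry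
        (fun q : T => P.contrMap ⟨q.1.2.1, q.2.1⟩ (hxw q) q.1.1)
        (P.continuous_contrPath (w := fun p : T × I => p.1.1.2.2) (t := fun p => p.1.1.1)
          (u := fun p => p.2) (hx.comp continuous_fst) (by fun_prop) (fun p => hxw p.1)
          (by fun_prop) (by fun_prop)))).congr fun q => ?_
    rw [domRestrict_apply, dif_pos (show _ ∧ _ from q.2)]
  contr_mem {t x w} hx hw := by
    rw [dif_pos ⟨hx, hw⟩]
    exact ⟨P.contrPath_zero _ w t, P.contrPath_one _ hw.2 t⟩
  contr_of_nonpos {t x w} hx ht hw := by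
    rw [dif_pos ⟨hx, hw⟩]
    exact Prod.ext (P.contrPoint_of_nonpos _ w ht)
      (ContinuousMap.ext (P.contrPath_of_nonpos ⟨x, hx⟩ hw ht))
  contr_of_one_le {t x} w hx ht := by
    split_ifs with h
    · simp only [sec, dif_pos hx]
      exact Prod.ext (P.contrPoint_of_one_le _ h.2.2 ht)
        (ContinuousMap.ext fun u => P.contrPath_of_one_le _ h.2.2 ht u)
    · rfl

end Patch

theorem exists_continuous_rightHomotopyInverse [ContinuousMul M] (hd : DoldSpace M)
    (hπ : ∀ x : M, ∃ y : M, Joined (x * y) 1 ∧ Joined (y * x) 1) :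
    ∃ ν : M → M, Continuous ν ∧ MapsHomotopic (fun x => x * ν x) fun _ => (1 : M) := by
  obtain ⟨ι, U, φ, hφU, hnull⟩ := hd
  choose c hc using hnull
  have P : ∀ i, Patch {x | 0 < φ i x} := fun i =>
    (Patch.nonempty_of_mapsHomotopic (fun x hx => hφU i (subset_tsupport _ hx.ne')) (hc i)
      hπ).some
  obtain ⟨s, hs, hsG⟩ := φ.exists_continuous_section fun i => (P i).fiberContraction
  exact ⟨fun x => (s x).1, by fun_prop, ⟨fun p => (s p.2).2 p.1, by fun_prop⟩,
    fun x => (hsG x).1, fun x => (hsG x).2⟩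

end

theorem dold_monoid_grouplike_general (M : Type u) [Monoid M] [TopologicalSpace M]
    [ContinuousMul M] (hd : DoldSpace M)
    (hπ : ∀ x : M, ∃ y : M, Joined (x * y) 1 ∧ Joined (y * x) 1) :
    ∃ ν : M → M, Continuous ν ∧
      MapsHomotopic (fun x => x * ν x) (fun _ => (1 : M)) ∧
      MapsHomotopic (fun x => ν x * x) (fun _ => (1 : M)) := by
  obtain ⟨ν, hν, hright⟩ := exists_continuous_rightHomotopyInverse hd hπ
  have hνν : MapsHomotopic (fun x => ν x * ν (ν x)) fun _ => (1 : M) := hright.comp hν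
  have h1 : MapsHomotopic (fun x => ν x * x * 1) fun x => ν x * x * (ν x * ν (ν x)) :=
    (MapsHomotopic.refl (by fun_prop)).mul hνν.symm
  have h2 : MapsHomotopic (fun x => ν x * (x * ν x) * ν (ν x)) fun x => ν x * 1 * ν (ν x) :=
    ((MapsHomotopic.refl hν).mul hright).mul (.refl (by fun_prop))
  simp only [mul_one, ← mul_assoc] at h1 h2
  exact ⟨ν, hν, hright, (h1.trans h2).trans hνν⟩

/-- If `M` is a well-pointed topological monoid whose underlying space is a Dold space
and `π₀(M)` is a group under the induced multiplication, then `M` is grouplike: it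
admits a continuous homotopy inversion `ν` with `x·ν(x)` and `ν(x)·x` homotopic to the
constant map at the unit. -/
theorem dold_monoid_grouplike (M : Type u) [Monoid M] [TopologicalSpace M]
    [ContinuousMul M] (hw : WellPointedMon M) (hd : DoldSpace M)
    (hπ : ∀ x : M, ∃ y : M, Joined (x * y) 1 ∧ Joined (y * x) 1) :
    ∃ ν : M → M, Continuous ν ∧
      MapsHomotopic (fun x => x * ν x) (fun _ => (1 : M)) ∧
      MapsHomotopic (fun x => ν x * x) (fun _ => (1 : M)) :=
  dold_monoid_grouplike_general M hd hπ
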